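/- arXiv:1609.00040 — 4 statements merged into one kernel-verified Lean document; each statement's English description precedes it below -/
import Mathlib

section
/- Let X be a reflexive complex Banach space and θ ∈ (0, π/2]. For each n ∈ ℕ let S⁽ⁿ⁾ and S be degenerate semigroups on X extending to holomorphic semigroups on the common sector Σ_θ with sup_{n} sup_{z∈Σ_θ} ‖S⁽ⁿ⁾_z‖ < ∞ and sup_{z∈Σ_θ} ‖S_z‖ < ∞, and suppose that for all f ∈ X and 0 < δ < T one has lim_{n→∞} sup_{t∈[δ,T]} ‖(S⁽ⁿ⁾_t − S_t) f‖ = 0. Assume that for every f ∈ X the limits Pₙ f := lim_{t↓0} S⁽ⁿ⁾_t f and P f := lim_{t↓0} S_t f exist (so that Pₙ and P are bounded projections on X). Then the following are equivalent: (i) for every T > 0 and f ∈ X, lim_{n→∞} sup_{t∈(0,T]} ‖(S⁽ⁿ⁾_t − S_t) f‖ = 0; (ii) there exists T > 0 such that lim_{n→∞} sup_{t∈(0,T]} ‖(S⁽ⁿ⁾_t − S_t) f‖ = 0 for every f ∈ X; (iii) Pₙ → P in the strong operator topology. -/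
open MeasureTheory Filter Topology

/-- The open sector `Σ_θ = {z ∈ ℂ ∖ {0} : |arg z| < θ}`. -/
def ComplexSector (θ : ℝ) : Set ℂ := {z : ℂ | z ≠ 0 ∧ |z.arg| < θ}

/-!
STATEMENT 2: Let `X` be a reflexive complex Banach space, and let `S⁽ⁿ⁾`, `S`
be uniformly bounded analytic degenerate semigroups on a common sector `Σ_θ`
which converge in the strong operator topology uniformly on compact
subintervals `[δ, T]` of `(0, ∞)`.  Let `Pₙ f = lim_{t↓0} S⁽ⁿ⁾_t f` and
`P f = lim_{t↓0} S_t f` be the associated projections.  Then uniform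
convergence on intervals `(0, T]` (for all, resp. one, `T > 0`) is equivalent
to `Pₙ → P` in the strong operator topology.
-/

theorem analytic_degenerate_semigroup_uniform_convergence_up_to_zero_tfae
    {X : Type*} [NormedAddCommGroup X] [NormedSpace ℂ X] [CompleteSpace X]
    -- X is reflexive
    (hrefl : Function.Surjective (NormedSpace.inclusionInDoubleDual ℂ X))
    (θ : ℝ) (hθ : θ ∈ Set.Ioc 0 (Real.pi / 2))
    (S : ℕ → ℝ → X →L[ℂ] X) (S' : ℝ → X →L[ℂ] X)
    (hScont : ∀ n, ∀ x : X, ContinuousOn (fun t => S n t x) (Set.Ioi (0 : ℝ)))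
    (hS'cont : ∀ x : X, ContinuousOn (fun t => S' t x) (Set.Ioi (0 : ℝ)))
    (hSsg : ∀ n, ∀ s t : ℝ, 0 < s → 0 < t → S n (s + t) = (S n s).comp (S n t))
    (hS'sg : ∀ s t : ℝ, 0 < s → 0 < t → S' (s + t) = (S' s).comp (S' t))
    -- holomorphic extensions to the sector Σ_θ
    (Z : ℕ → ℂ → X →L[ℂ] X) (Z' : ℂ → X →L[ℂ] X)
    (hZhol : ∀ n, DifferentiableOn ℂ (Z n) (ComplexSector θ))
    (hZ'hol : DifferentiableOn ℂ Z' (ComplexSector θ))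
    (hZsg : ∀ n, ∀ z ∈ ComplexSector θ, ∀ w ∈ ComplexSector θ,
      Z n (z + w) = (Z n z).comp (Z n w))
    (hZ'sg : ∀ z ∈ ComplexSector θ, ∀ w ∈ ComplexSector θ,
      Z' (z + w) = (Z' z).comp (Z' w))
    (hZext : ∀ n, ∀ t : ℝ, 0 < t → Z n t = S n t)
    (hZ'ext : ∀ t : ℝ, 0 < t → Z' t = S' t)
    -- uniform boundedness on the sector
    (C : ℝ) (hC : ∀ n, ∀ z ∈ ComplexSector θ, ‖Z n z‖ ≤ C)
    (C' : ℝ) (hC' : ∀ z ∈ ComplexSector θ, ‖Z' z‖ ≤ C')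
    -- uniform convergence on compact subintervals of (0, ∞)
    (hconv : ∀ f : X, ∀ δ T : ℝ, 0 < δ → δ < T →
      Tendsto (fun n => ⨆ t : Set.Icc δ T, ‖S n t f - S' t f‖) atTop (nhds 0))
    -- the projections P_n and P, given as strong limits as t ↓ 0
    (P : ℕ → X →L[ℂ] X) (P' : X →L[ℂ] X)
    (hP : ∀ n, ∀ f : X, Tendsto (fun t => S n t f) (nhdsWithin 0 (Set.Ioi 0)) (nhds (P n f)))
    (hP' : ∀ f : X, Tendsto (fun t => S' t f) (nhdsWithin 0 (Set.Ioi 0)) (nhds (P' f))) :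
    List.TFAE [
      -- (i) uniform convergence on (0, T] for every T > 0
      ∀ T : ℝ, 0 < T → ∀ f : X,
        Tendsto (fun n => ⨆ t : Set.Ioc (0 : ℝ) T, ‖S n t f - S' t f‖) atTop (nhds 0),
      -- (ii) uniform convergence on (0, T] for some T > 0
      ∃ T : ℝ, 0 < T ∧ ∀ f : X,
        Tendsto (fun n => ⨆ t : Set.Ioc (0 : ℝ) T, ‖S n t f - S' t f‖) atTop (nhds 0),
      -- (iii) SOT convergence of the projections
      ∀ f : X, Tendsto (fun n => P n f) atTop (nhds (P' f))
    ] := by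
  obtain ⟨hθ0, hθπ⟩ := hθ
  -- positive reals lie in the sector
  have hsec : ∀ t : ℝ, 0 < t → (t : ℂ) ∈ ComplexSector θ := by
    intro t ht
    refine ⟨by exact_mod_cast ht.ne', ?_⟩
    rw [Complex.arg_ofReal_of_nonneg ht.le]
    simpa using hθ0
  have hCn : ∀ n (t : ℝ), 0 < t → ‖S n t‖ ≤ C := by
    intro n t ht; rw [← hZext n t ht]; exact hC n (t : ℂ) (hsec t ht)
  have hC'n : ∀ (t : ℝ), 0 < t → ‖S' t‖ ≤ C' := by
    intro t ht; rw [← hZ'ext t ht]; exact hC' (t : ℂ) (hsec t ht)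
  have hC0 : 0 ≤ C := le_trans (norm_nonneg _) (hCn 0 1 one_pos)
  have hC'0 : 0 ≤ C' := le_trans (norm_nonneg _) (hC'n 1 one_pos)
  -- pointwise bound
  have hptbd : ∀ n (t : ℝ), 0 < t → ∀ g : X, ‖S n t g - S' t g‖ ≤ (C + C') * ‖g‖ := by
    intro n t ht g
    calc ‖S n t g - S' t g‖ ≤ ‖S n t g‖ + ‖S' t g‖ := norm_sub_le _ _
      _ ≤ C * ‖g‖ + C' * ‖g‖ :=
        add_le_add ((S n t).le_of_opNorm_le (hCn n t ht) g)
          ((S' t).le_of_opNorm_le (hC'n t ht) g)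
      _ = (C + C') * ‖g‖ := by ring
  have hbdd : ∀ n (g : X) (s : Set ℝ), (∀ t ∈ s, (0:ℝ) < t) →
      BddAbove (Set.range fun t : s => ‖S n t g - S' t g‖) := by
    intro n g s hs
    refine ⟨(C + C') * ‖g‖, ?_⟩
    rintro x ⟨t, rfl⟩
    exact hptbd n t (hs t t.2) g
  -- `S'` and `S n` are unchanged by the projections
  have key' : ∀ s : ℝ, 0 < s → ∀ f : X, S' s (P' f) = S' s f := by
    intro s hs f
    have hc : ContinuousAt (fun t => S' t f) s :=
      (hS'cont f).continuousAt (Ioi_mem_nhds hs)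
    have hu : Tendsto (fun u : ℝ => s + u) (𝓝[>] (0:ℝ)) (𝓝 s) := by
      have h0 : Tendsto (fun u : ℝ => s + u) (𝓝 (0:ℝ)) (𝓝 (s + 0)) :=
        (continuous_const.add continuous_id).tendsto 0
      simpa using h0.mono_left nhdsWithin_le_nhds
    have h1 : Tendsto (fun u : ℝ => S' (s + u) f) (𝓝[>] (0:ℝ)) (𝓝 (S' s f)) :=
      hc.tendsto.comp hu
    have h2 : Tendsto (fun u : ℝ => S' (s + u) f) (𝓝[>] (0:ℝ)) (𝓝 (S' s (P' f))) := by
      have h3 : Tendsto (fun u : ℝ => S' s (S' u f)) (𝓝[>] (0:ℝ)) (𝓝 (S' s (P' f))) :=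
        ((S' s).continuous.tendsto _).comp (hP' f)
      refine h3.congr' ?_
      filter_upwards [self_mem_nhdsWithin] with u hu'
      rw [hS'sg s u hs hu']; rfl
    exact tendsto_nhds_unique h2 h1
  have keyn : ∀ n, ∀ s : ℝ, 0 < s → ∀ f : X, S n s (P n f) = S n s f := by
    intro n s hs f
    have hc : ContinuousAt (fun t => S n t f) s :=
      (hScont n f).continuousAt (Ioi_mem_nhds hs)
    have hu : Tendsto (fun u : ℝ => s + u) (𝓝[>] (0:ℝ)) (𝓝 s) := by
      have h0 : Tendsto (fun u : ℝ => s + u) (𝓝 (0:ℝ)) (𝓝 (s + 0)) :=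
        (continuous_const.add continuous_id).tendsto 0
      simpa using h0.mono_left nhdsWithin_le_nhds
    have h1 : Tendsto (fun u : ℝ => S n (s + u) f) (𝓝[>] (0:ℝ)) (𝓝 (S n s f)) :=
      hc.tendsto.comp hu
    have h2 : Tendsto (fun u : ℝ => S n (s + u) f) (𝓝[>] (0:ℝ)) (𝓝 (S n s (P n f))) := by
      have h3 : Tendsto (fun u : ℝ => S n s (S n u f)) (𝓝[>] (0:ℝ)) (𝓝 (S n s (P n f))) :=
        ((S n s).continuous.tendsto _).comp (hP n f)
      refine h3.congr' ?_
      filter_upwards [self_mem_nhdsWithin] with u hu'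
      rw [hSsg n s u hs hu']; rfl
    exact tendsto_nhds_unique h2 h1
  tfae_have 1 → 2 := fun h => ⟨1, one_pos, h 1 one_pos⟩
  tfae_have 2 → 3 := by
    rintro ⟨T, hT, h⟩ f
    have hsq : Tendsto (fun n => ‖P n f - P' f‖) atTop (𝓝 0) := by
      refine squeeze_zero (fun n => norm_nonneg _) (fun n => ?_) (h f)
      have hlim : Tendsto (fun t : ℝ => ‖S n t f - S' t f‖) (𝓝[>] (0:ℝ))
          (𝓝 ‖P n f - P' f‖) := ((hP n f).sub (hP' f)).norm
      refine le_of_tendsto hlim ?_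
      filter_upwards [Ioc_mem_nhdsGT_of_mem ⟨le_refl (0:ℝ), hT⟩] with t ht
      exact le_ciSup (hbdd n f (Set.Ioc 0 T) (fun u hu => hu.1)) (⟨t, ht⟩ : Set.Ioc (0:ℝ) T)
    have h4 : Tendsto (fun n => P n f - P' f) atTop (𝓝 0) := by
      rw [← tendsto_zero_iff_norm_tendsto_zero] at hsq; exact hsq
    have h5 := h4.add (tendsto_const_nhds (x := P' f))
    simpa using h5
  tfae_have 3 → 1 := by
    intro h3 T hT f
    set g := P' f with hg
    haveI : Nonempty (Set.Ioc (0:ℝ) T) := ⟨⟨T, ⟨hT, le_refl T⟩⟩⟩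
    rw [Metric.tendsto_atTop]
    intro ε hε
    have hden : (0:ℝ) < 4 * (C + C' + 1) := by nlinarith
    set ε₁ := ε / (4 * (C + C' + 1)) with hε₁def
    have hε₁ : 0 < ε₁ := div_pos hε hden
    have hε₁C : ε₁ * (4 * (C + C' + 1)) = ε := div_mul_cancel₀ ε hden.ne'
    -- choose a small s with ‖S' s f - g‖ < ε₁
    have hev : ∀ᶠ s in 𝓝[>] (0:ℝ), ‖S' s f - g‖ < ε₁ := by
      have := (hP' f).eventually (Metric.ball_mem_nhds g hε₁)
      filter_upwards [this] with u hu
      simpa [dist_eq_norm] using hu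
    obtain ⟨s, hse, hs⟩ := (hev.and self_mem_nhdsWithin).exists
    have hs : 0 < s := hs
    have hS'sg' : S' s g = S' s f := key' s hs f
    have he : ‖g - S' s g‖ < ε₁ := by
      rw [hS'sg', norm_sub_rev]; exact hse
    -- three null sequences
    have hp : Tendsto (fun n => ‖P n f - g‖) atTop (𝓝 0) := by
      have h4 : Tendsto (fun n => P n f - g) atTop (𝓝 (P' f - g)) :=
        (h3 f).sub tendsto_const_nhds
      rw [hg] at h4 ⊢
      simpa using h4.norm
    have hcseq : Tendsto (fun n => ‖S' s g - S n s g‖) atTop (𝓝 0) := by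
      refine squeeze_zero (fun n => norm_nonneg _) (fun n => ?_)
        (hconv g s (s + 1) hs (lt_add_one s))
      have hmem : s ∈ Set.Icc s (s + 1) := ⟨le_refl s, by linarith⟩
      have := le_ciSup (hbdd n g (Set.Icc s (s + 1)) (fun u hu => lt_of_lt_of_le hs hu.1))
        (⟨s, hmem⟩ : Set.Icc s (s + 1))
      rw [norm_sub_rev]
      exact this
    have hdseq : Tendsto (fun n => ⨆ u : Set.Icc s (T + s), ‖S n u g - S' u g‖) atTop (𝓝 0) :=
      hconv g s (T + s) hs (by linarith)
    have hev1 := hp.eventually (gt_mem_nhds hε₁)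
    have hev2 := hcseq.eventually (gt_mem_nhds hε₁)
    have hev3 := hdseq.eventually (gt_mem_nhds (show (0:ℝ) < ε / 4 by linarith))
    obtain ⟨N, hN⟩ := eventually_atTop.mp ((hev1.and hev2).and hev3)
    refine ⟨N, fun n hn => ?_⟩
    obtain ⟨⟨hn1, hn2⟩, hn3⟩ := hN n hn
    set dn := ⨆ u : Set.Icc s (T + s), ‖S n u g - S' u g‖ with hdn
    have hbIoc := hbdd n f (Set.Ioc (0:ℝ) T) (fun u hu => hu.1)
    have hbIcc := hbdd n g (Set.Icc s (T + s)) (fun u hu => lt_of_lt_of_le hs hu.1)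
    -- the per-t estimate
    have hsup : (⨆ t : Set.Ioc (0:ℝ) T, ‖S n t f - S' t f‖)
        ≤ C * ‖P n f - g‖ + C * ‖g - S' s g‖ + C * ‖S' s g - S n s g‖ + dn
          + C' * ‖S' s g - g‖ := by
      refine ciSup_le ?_
      rintro ⟨t, ht⟩
      simp only
      have ht0 : (0:ℝ) < t := ht.1
      have e3 : S n (t + s) g = S n t (S n s g) := by
        rw [hSsg n t s ht0 hs]; rfl
      have e4 : S' (t + s) g = S' t (S' s g) := by
        rw [hS'sg t s ht0 hs]; rfl
      have edec : S n t f - S' t f =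
          S n t (P n f - g) + S n t (g - S' s g) + S n t (S' s g - S n s g)
            + (S n (t + s) g - S' (t + s) g) + S' t (S' s g - g) := by
        rw [← keyn n t ht0 f, ← key' t ht0 f, e3, e4, map_sub, map_sub, map_sub, map_sub]
        rw [← hg]
        abel
      have hd : ‖S n (t + s) g - S' (t + s) g‖ ≤ dn := by
        have hmem : t + s ∈ Set.Icc s (T + s) := ⟨by linarith, by have := ht.2; linarith⟩
        exact le_ciSup hbIcc (⟨t + s, hmem⟩ : Set.Icc s (T + s))
      calc ‖S n t f - S' t f‖
          ≤ ‖S n t (P n f - g) + S n t (g - S' s g) + S n t (S' s g - S n s g)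
              + (S n (t + s) g - S' (t + s) g)‖ + ‖S' t (S' s g - g)‖ := by
            rw [edec]; exact norm_add_le _ _
        _ ≤ (‖S n t (P n f - g) + S n t (g - S' s g) + S n t (S' s g - S n s g)‖
              + ‖S n (t + s) g - S' (t + s) g‖) + ‖S' t (S' s g - g)‖ := by
            gcongr; exact norm_add_le _ _
        _ ≤ ((‖S n t (P n f - g) + S n t (g - S' s g)‖ + ‖S n t (S' s g - S n s g)‖)
              + ‖S n (t + s) g - S' (t + s) g‖) + ‖S' t (S' s g - g)‖ := by
            gcongr; exact norm_add_le _ _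
        _ ≤ (((‖S n t (P n f - g)‖ + ‖S n t (g - S' s g)‖) + ‖S n t (S' s g - S n s g)‖)
              + ‖S n (t + s) g - S' (t + s) g‖) + ‖S' t (S' s g - g)‖ := by
            gcongr; exact norm_add_le _ _
        _ ≤ C * ‖P n f - g‖ + C * ‖g - S' s g‖ + C * ‖S' s g - S n s g‖ + dn
              + C' * ‖S' s g - g‖ := by
            gcongr
            · exact (S n t).le_of_opNorm_le (hCn n t ht0) _
            · exact (S n t).le_of_opNorm_le (hCn n t ht0) _
            · exact (S n t).le_of_opNorm_le (hCn n t ht0) _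
            · exact (S' t).le_of_opNorm_le (hC'n t ht0) _
    have hsup0 : 0 ≤ ⨆ t : Set.Ioc (0:ℝ) T, ‖S n t f - S' t f‖ := by
      refine le_trans (norm_nonneg (S n T f - S' T f)) ?_
      exact le_ciSup hbIoc (⟨T, ⟨hT, le_refl T⟩⟩ : Set.Ioc (0:ℝ) T)
    rw [Real.dist_eq, sub_zero, abs_of_nonneg hsup0]
    have hee : ‖S' s g - g‖ < ε₁ := by rw [norm_sub_rev]; exact he
    have b1 : C * ‖P n f - g‖ ≤ C * ε₁ := mul_le_mul_of_nonneg_left hn1.le hC0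
    have b2 : C * ‖g - S' s g‖ ≤ C * ε₁ := mul_le_mul_of_nonneg_left he.le hC0
    have b3 : C * ‖S' s g - S n s g‖ ≤ C * ε₁ := mul_le_mul_of_nonneg_left hn2.le hC0
    have b5 : C' * ‖S' s g - g‖ ≤ C' * ε₁ := mul_le_mul_of_nonneg_left hee.le hC'0
    have : C * ε₁ + C * ε₁ + C * ε₁ + C' * ε₁ ≤ 3 * ε / 4 := by nlinarith
    calc (⨆ t : Set.Ioc (0:ℝ) T, ‖S n t f - S' t f‖)
        ≤ C * ‖P n f - g‖ + C * ‖g - S' s g‖ + C * ‖S' s g - S n s g‖ + dn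
          + C' * ‖S' s g - g‖ := hsup
      _ < C * ε₁ + C * ε₁ + C * ε₁ + ε / 4 + C' * ε₁ := by
          have := hn3
          linarith [b1, b2, b3, b5]
      _ ≤ ε := by linarith
  tfae_finish
end

section
/- Let H = ℓ²(ℕ; ℂ) and, for each n ∈ ℕ, let Uₙ ∈ L(H) be the block-swap operator Uₙ(x₁, x₂, …) = (x_{n+1}, …, x_{2n}, x₁, …, x_n, x_{2n+1}, …). Set Vₙ = (1 − 1/n) Uₙ, so that ‖Vₙ‖ < 1, and let Aₙ = (I + Vₙ)(I − Vₙ)^{−1} be the Cayley transform. Then each Aₙ is a bounded positive self-adjoint operator, (I + Aₙ)^{−1} = ½ (I − Vₙ), and (I + Aₙ)^{−1} → ½ I in the weak operator topology as n → ∞, but the sequence ((I + Aₙ)^{−1}) does not converge in the strong operator topology. -/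
/-!
`Uₙ` permutes coordinates by an involution of `ℕ`, so it is a self-adjoint isometry; hence `Vₙ`
is self-adjoint with `‖Vₙ‖ < 1` and `I - Vₙ` is invertible. Everything about `Aₙ` then follows
from `Aₙ (I - Vₙ) = I + Vₙ` alone: `Aₙ` commutes with `I - Vₙ`, `(I + Aₙ)(I - Vₙ) = 2`, and
`Re ⟪Aₙ x, x⟫ = ‖y‖² - ‖Vₙ y‖² ≥ 0` for `x = (I - Vₙ) y`.

Since `Uₙ` moves the first `n` coordinates past the `n`-th, `⟪Uₙ (Pₙ f), Pₙ g⟫ = 0` for the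
truncations `Pₙ` to those coordinates, and `Pₙ → I` strongly gives `⟪Uₙ f, g⟫ → 0`. A strong limit
of `½ (I - Vₙ) f` would have to be the weak limit `½ f`, forcing `Vₙ f → 0`, which is impossible
for `f ≠ 0` as `‖Vₙ f‖ = (1 - 1/n) ‖f‖`.
-/

open Filter Topology

open scoped ENNReal InnerProductSpace

section Cayley

variable {R : Type*} [Ring R] {A V : R}

theorem Commute.of_mul_one_sub_eq_one_add (hunit : IsUnit (1 - V)) (hA : A * (1 - V) = 1 + V) :
    Commute A (1 - V) := by
  refine hunit.mul_right_cancel ?_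
  calc A * (1 - V) * (1 - V) = (1 + V) * (1 - V) := by rw [hA]
    _ = (1 - V) * (1 + V) := by noncomm_ring
    _ = (1 - V) * A * (1 - V) := by rw [mul_assoc, hA]

theorem IsSelfAdjoint.of_mul_one_sub_eq_one_add [StarRing R] (hV : IsSelfAdjoint V)
    (hunit : IsUnit (1 - V)) (hA : A * (1 - V) = 1 + V) : IsSelfAdjoint A := by
  refine hunit.mul_left_cancel ?_
  have hstar : star (1 - V) = 1 - V := by rw [star_sub, star_one, hV.star_eq]
  calc (1 - V) * star A = star (A * (1 - V)) := by rw [star_mul, hstar]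
    _ = 1 + V := by rw [hA, star_add, star_one, hV.star_eq]
    _ = (1 - V) * A := by rw [← hA, (Commute.of_mul_one_sub_eq_one_add hunit hA).eq]

theorem one_add_mul_half_smul_one_sub {𝕜 : Type*} [Field 𝕜] [CharZero 𝕜] [Algebra 𝕜 R]
    (hunit : IsUnit (1 - V)) (hA : A * (1 - V) = 1 + V) :
    (1 + A) * ((2 : 𝕜)⁻¹ • (1 - V)) = 1 ∧ ((2 : 𝕜)⁻¹ • (1 - V)) * (1 + A) = 1 := by
  have htwo : (1 - V) + (1 + V) = (2 : 𝕜) • (1 : R) := by rw [two_smul]; abel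
  have hhalf : (2 : 𝕜)⁻¹ • (2 : 𝕜) • (1 : R) = 1 := by
    rw [smul_smul, inv_mul_cancel₀ two_ne_zero, one_smul]
  constructor
  · rw [mul_smul_comm, add_mul, one_mul, hA, htwo, hhalf]
  · rw [smul_mul_assoc, mul_add, mul_one, ← (Commute.of_mul_one_sub_eq_one_add hunit hA).eq, hA,
      htwo, hhalf]

end Cayley

section Hilbert

variable {𝕜 E : Type*} [RCLike 𝕜] [NormedAddCommGroup E] [InnerProductSpace 𝕜 E]

theorem re_inner_add_sub (x y : E) : RCLike.re ⟪x + y, x - y⟫_𝕜 = ‖x‖ ^ 2 - ‖y‖ ^ 2 := by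
  rw [inner_add_left, inner_sub_right, inner_sub_right, map_add, map_sub, map_sub,
    inner_re_symm (𝕜 := 𝕜) y x, inner_self_eq_norm_sq, inner_self_eq_norm_sq]
  ring

theorem re_inner_nonneg_of_mul_one_sub_eq_one_add {A V : E →L[𝕜] E} (hV : ‖V‖ ≤ 1)
    (hunit : IsUnit (1 - V)) (hA : A * (1 - V) = 1 + V) (x : E) : 0 ≤ RCLike.re ⟪A x, x⟫_𝕜 := by
  obtain ⟨y, rfl⟩ : ∃ y, (1 - V) y = x :=
    ⟨(↑hunit.unit⁻¹ : E →L[𝕜] E) x, by rw [← mul_apply_eq_comp, hunit.mul_val_inv, one_apply_eq_self]⟩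
  rw [← mul_apply_eq_comp, hA, sub_apply, add_apply, one_apply_eq_self, re_inner_add_sub,
    sub_nonneg]
  gcongr
  simpa using V.le_of_opNorm_le hV y

theorem eq_of_tendsto_of_tendsto_inner {x : ℕ → E} {y z : E} (hy : Tendsto x atTop (𝓝 y))
    (hz : ∀ g, Tendsto (fun n => ⟪x n, g⟫_𝕜) atTop (𝓝 ⟪z, g⟫_𝕜)) : y = z :=
  ext_inner_right 𝕜 fun g => tendsto_nhds_unique (hy.inner tendsto_const_nhds) (hz g)

theorem tendsto_inner_apply_zero_of_inner_apply_eq_zero {T : ℕ → E →L[𝕜] E} {C : ℝ}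
    (hT : ∀ n, ‖T n‖ ≤ C) {Q : ℕ → E → E} (hQ : ∀ x, Tendsto (fun n => Q n x) atTop (𝓝 x))
    (horth : ∀ n f g, ⟪T n (Q n f), Q n g⟫_𝕜 = 0) (f g : E) :
    Tendsto (fun n => ⟪T n f, g⟫_𝕜) atTop (𝓝 0) := by
  have hsplit : ∀ n, ⟪T n f, g⟫_𝕜 = ⟪T n (Q n f), g - Q n g⟫_𝕜 + ⟪T n (f - Q n f), g⟫_𝕜 := by
    intro n
    rw [inner_sub_right, horth, map_sub, inner_sub_left]
    ring
  have hbound : ∀ n, ‖⟪T n f, g⟫_𝕜‖ ≤ C * ‖Q n f‖ * ‖g - Q n g‖ + C * ‖f - Q n f‖ * ‖g‖ := by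
    intro n
    calc ‖⟪T n f, g⟫_𝕜‖
        ≤ ‖T n (Q n f)‖ * ‖g - Q n g‖ + ‖T n (f - Q n f)‖ * ‖g‖ := by
          rw [hsplit]
          exact (norm_add_le _ _).trans (add_le_add (norm_inner_le_norm _ _)
            (norm_inner_le_norm _ _))
      _ ≤ C * ‖Q n f‖ * ‖g - Q n g‖ + C * ‖f - Q n f‖ * ‖g‖ := by
          gcongr <;> exact (T n).le_of_opNorm_le (hT n) _
  have hrem : ∀ x, Tendsto (fun n => ‖x - Q n x‖) atTop (𝓝 0) := fun x => by
    simpa using ((tendsto_const_nhds (x := x)).sub (hQ x)).norm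
  refine squeeze_zero_norm hbound ?_
  simpa using ((tendsto_const_nhds.mul (hQ f).norm).mul (hrem g)).add
    ((tendsto_const_nhds.mul (hrem f)).mul (tendsto_const_nhds (x := ‖g‖)))

theorem tendsto_inner_smul_one_sub_smul_apply {T : ℕ → E →L[𝕜] E} {c : ℕ → 𝕜} {c₀ : 𝕜}
    (hc : Tendsto c atTop (𝓝 c₀)) {f g : E} (hT : Tendsto (fun n => ⟪T n f, g⟫_𝕜) atTop (𝓝 0))
    (a : 𝕜) : Tendsto (fun n => ⟪(a • (1 - c n • T n)) f, g⟫_𝕜) atTop (𝓝 ⟪a • f, g⟫_𝕜) := by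
  simp only [smul_apply, sub_apply, one_apply_eq_self, inner_smul_left, inner_sub_left]
  simpa using tendsto_const_nhds.mul
    (tendsto_const_nhds.sub (((RCLike.continuous_conj.tendsto c₀).comp hc).mul hT))

theorem eq_zero_of_tendsto_smul_one_sub_smul_apply {T : ℕ → E →L[𝕜] E}
    (hT : ∀ n x, ‖T n x‖ = ‖x‖) {c : ℕ → 𝕜} {a c₀ : 𝕜} (ha : a ≠ 0) (hc : Tendsto c atTop (𝓝 c₀))
    (hc₀ : c₀ ≠ 0) {f y : E} (hTf : ∀ g, Tendsto (fun n => ⟪T n f, g⟫_𝕜) atTop (𝓝 0))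
    (hy : Tendsto (fun n => (a • (1 - c n • T n)) f) atTop (𝓝 y)) : f = 0 := by
  have hy_eq : y = a • f :=
    eq_of_tendsto_of_tendsto_inner hy fun g => tendsto_inner_smul_one_sub_smul_apply hc (hTf g) a
  have hzero : Tendsto (fun n => ‖a‖ * ‖c n‖ * ‖f‖) atTop (𝓝 0) := by
    have h := ((tendsto_const_nhds (x := a • f)).sub hy).norm
    rw [hy_eq, sub_self, norm_zero] at h
    refine h.congr fun n => ?_
    rw [smul_apply, sub_apply, one_apply_eq_self, smul_sub, sub_sub_cancel, smul_apply,
      norm_smul, norm_smul, hT, mul_assoc]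
  have hlim := ((tendsto_const_nhds (x := ‖a‖)).mul hc.norm).mul_const ‖f‖
  simpa [ha, hc₀] using tendsto_nhds_unique hlim hzero

end Hilbert

section lp

variable {ι E : Type*} [NormedAddCommGroup E]

theorem lp.norm_eq_of_apply_eq_comp {p : ℝ≥0∞} (hp : 0 < p.toReal) {x y : lp (fun _ : ι => E) p}
    {σ : ι → ι} (hσ : σ.Bijective) (hxy : ∀ i, y i = x (σ i)) : ‖y‖ = ‖x‖ := by
  rw [lp.norm_eq_tsum_rpow hp, lp.norm_eq_tsum_rpow hp,
    ← (Equiv.ofBijective σ hσ).tsum_eq (fun i => ‖x i‖ ^ p.toReal)]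
  simp only [Equiv.ofBijective_apply, hxy]

theorem isSelfAdjoint_of_apply_eq_comp {𝕜 : Type*} [RCLike 𝕜] [InnerProductSpace 𝕜 E]
    [CompleteSpace E] {T : lp (fun _ : ι => E) 2 →L[𝕜] lp (fun _ : ι => E) 2}
    {σ : ι → ι} (hσ : σ.Involutive) (hT : ∀ x i, T x i = x (σ i)) : IsSelfAdjoint T := by
  rw [ContinuousLinearMap.isSelfAdjoint_iff_isSymmetric]
  intro x y
  simp only [ContinuousLinearMap.coe_coe, lp.inner_eq_tsum, hT,
    ← (hσ.toPerm σ).tsum_eq (fun i => ⟪x (σ i), y i⟫_𝕜), Function.Involutive.coe_toPerm, hσ _]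

end lp

section Truncation

variable {E : ℕ → Type*} [∀ i, NormedAddCommGroup (E i)] {p : ℝ≥0∞}

noncomputable def truncation (n : ℕ) (x : lp E p) : lp E p :=
  ∑ i ∈ Finset.range n, lp.single p i (x i)

theorem truncation_apply (n : ℕ) (x : lp E p) (j : ℕ) :
    truncation n x j = if j < n then x j else 0 := by
  rw [truncation, lp.coeFn_sum, Finset.sum_apply]
  simp

theorem tendsto_truncation [Fact (1 ≤ p)] (hp : p ≠ ⊤) (x : lp E p) :
    Tendsto (fun n => truncation n x) atTop (𝓝 x) :=
  (lp.hasSum_single hp x).tendsto_sum_nat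

end Truncation

theorem inner_truncation_eq_zero_of_apply_eq_comp {𝕜 E : Type*} [RCLike 𝕜] [NormedAddCommGroup E]
    [InnerProductSpace 𝕜 E] {T : lp (fun _ : ℕ => E) 2 → lp (fun _ : ℕ => E) 2} {σ : ℕ → ℕ}
    {n : ℕ} (hσ : ∀ i < n, n ≤ σ i) (hT : ∀ x i, T x i = x (σ i)) (f g : lp (fun _ : ℕ => E) 2) :
    ⟪T (truncation n f), truncation n g⟫_𝕜 = 0 := by
  rw [lp.inner_eq_tsum]
  refine (tsum_congr fun i => ?_).trans tsum_zero
  rw [hT, truncation_apply, truncation_apply]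
  by_cases hi : i < n
  · rw [if_neg (hσ i hi).not_gt, inner_zero_left]
  · rw [if_neg hi, inner_zero_right]

theorem norm_one_sub_natCast_inv_smul_lt_one {𝕜 E : Type*} [RCLike 𝕜] [NormedAddCommGroup E]
    [NormedSpace 𝕜 E] {T : E →L[𝕜] E} (hT : ‖T‖ ≤ 1) {n : ℕ} (hn : 1 ≤ n) :
    ‖(1 - (n : 𝕜)⁻¹) • T‖ < 1 := by
  have hn' : (1 : ℝ) ≤ n := by exact_mod_cast hn
  have hc : ‖1 - (n : 𝕜)⁻¹‖ = 1 - (n : ℝ)⁻¹ := by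
    rw [← RCLike.ofReal_natCast, ← RCLike.ofReal_inv, ← RCLike.ofReal_one, ← RCLike.ofReal_sub,
      RCLike.norm_ofReal, abs_of_nonneg (sub_nonneg.mpr (inv_le_one_of_one_le₀ hn'))]
  calc ‖(1 - (n : 𝕜)⁻¹) • T‖ ≤ ‖1 - (n : 𝕜)⁻¹‖ * 1 := by
        rw [norm_smul]; gcongr
    _ < 1 := by rw [hc, mul_one]; linarith [inv_pos.mpr (zero_lt_one.trans_le hn')]

def blockSwap (n i : ℕ) : ℕ := if i < n then i + n else if i < 2 * n then i - n else i

theorem blockSwap_involutive (n : ℕ) : Function.Involutive (blockSwap n) := by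
  intro i
  simp only [blockSwap]
  split_ifs <;> omega

theorem le_blockSwap_of_lt {n i : ℕ} (h : i < n) : n ≤ blockSwap n i := by
  simp [blockSwap, h]

theorem cayley_block_swap_WOT_not_SOT
    (U : ℕ → lp (fun _ : ℕ => ℂ) 2 →L[ℂ] lp (fun _ : ℕ => ℂ) 2)
    (hU : ∀ n : ℕ, ∀ x : lp (fun _ : ℕ => ℂ) 2, ∀ i : ℕ,
      (U n x) i = if i < n then x (i + n) else if i < 2 * n then x (i - n) else x i)
    (A : ℕ → lp (fun _ : ℕ => ℂ) 2 →L[ℂ] lp (fun _ : ℕ => ℂ) 2)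
    (hA : ∀ n : ℕ, 1 ≤ n →
      (A n).comp (1 - (1 - (n : ℂ)⁻¹) • U n) = 1 + (1 - (n : ℂ)⁻¹) • U n) :
    (∀ n : ℕ, 1 ≤ n → ‖(1 - (n : ℂ)⁻¹) • U n‖ < 1) ∧
    (∀ n : ℕ, 1 ≤ n → IsSelfAdjoint (A n) ∧
      ∀ x : lp (fun _ : ℕ => ℂ) 2, 0 ≤ (inner ℂ (A n x) x : ℂ).re) ∧
    (∀ n : ℕ, 1 ≤ n →
      (1 + A n).comp ((2 : ℂ)⁻¹ • (1 - (1 - (n : ℂ)⁻¹) • U n)) = 1 ∧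
      ((2 : ℂ)⁻¹ • (1 - (1 - (n : ℂ)⁻¹) • U n)).comp (1 + A n) = 1) ∧
    (∀ f g : lp (fun _ : ℕ => ℂ) 2,
      Tendsto (fun (n : ℕ) => (inner ℂ (((2 : ℂ)⁻¹ • (1 - (1 - (n : ℂ)⁻¹) • U n)) f) g : ℂ))
        atTop (nhds (inner ℂ ((2 : ℂ)⁻¹ • f) g))) ∧
    ¬ ∃ B : lp (fun _ : ℕ => ℂ) 2 →L[ℂ] lp (fun _ : ℕ => ℂ) 2,
      ∀ f : lp (fun _ : ℕ => ℂ) 2,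
        Tendsto (fun (n : ℕ) => ((2 : ℂ)⁻¹ • (1 - (1 - (n : ℂ)⁻¹) • U n)) f)
          atTop (nhds (B f)) := by
  have hσ : ∀ n x i, U n x i = x (blockSwap n i) := by
    intro n x i
    rw [hU, blockSwap, apply_ite x, apply_ite x]
  have hiso : ∀ n x, ‖U n x‖ = ‖x‖ := fun n x =>
    lp.norm_eq_of_apply_eq_comp (by norm_num) (blockSwap_involutive n).bijective (hσ n x)
  have hUnorm : ∀ n, ‖U n‖ ≤ 1 := fun n =>
    (U n).opNorm_le_bound zero_le_one fun x => by rw [hiso, one_mul]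
  have hV : ∀ n : ℕ, 1 ≤ n → ‖(1 - (n : ℂ)⁻¹) • U n‖ < 1 := fun n hn =>
    norm_one_sub_natCast_inv_smul_lt_one (hUnorm n) hn
  have hunit := fun n hn => isUnit_one_sub_of_norm_lt_one (hV n hn)
  have hUweak : ∀ f g, Tendsto (fun n => ⟪U n f, g⟫_ℂ) atTop (𝓝 0) :=
    tendsto_inner_apply_zero_of_inner_apply_eq_zero hUnorm (tendsto_truncation (by norm_num))
      fun n => inner_truncation_eq_zero_of_apply_eq_comp (fun _ => le_blockSwap_of_lt) (hσ n)
  have hc : Tendsto (fun n : ℕ => 1 - (n : ℂ)⁻¹) atTop (𝓝 1) := by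
    simpa using tendsto_const_nhds.sub (tendsto_inv_atTop_nhds_zero_nat (𝕜 := ℂ))
  refine ⟨hV, fun n hn => ⟨?_, ?_⟩, fun n hn => ?_, fun f g => ?_, ?_⟩
  · refine IsSelfAdjoint.of_mul_one_sub_eq_one_add ?_ (hunit n hn) (hA n hn)
    exact .smul (by simp [IsSelfAdjoint])
      (isSelfAdjoint_of_apply_eq_comp (blockSwap_involutive n) (hσ n))
  · exact re_inner_nonneg_of_mul_one_sub_eq_one_add (hV n hn).le (hunit n hn) (hA n hn)
  · exact one_add_mul_half_smul_one_sub (hunit n hn) (hA n hn)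
  · exact tendsto_inner_smul_one_sub_smul_apply hc (hUweak f g) _
  · rintro ⟨B, hB⟩
    let f : lp (fun _ : ℕ => ℂ) 2 := lp.single 2 0 1
    have hf : f ≠ 0 := fun h => one_ne_zero (congrArg (fun x : lp (fun _ : ℕ => ℂ) 2 => x 0) h)
    exact hf (eq_zero_of_tendsto_smul_one_sub_smul_apply hiso (inv_ne_zero two_ne_zero) hc
      one_ne_zero (hUweak f) (hB f))
end

section
/- Let H be a complex Hilbert space. For each n ∈ ℕ let S⁽ⁿ⁾ and S be degenerate semigroups on H consisting of self-adjoint contractions. Suppose that for all T > 0, all f ∈ H and all g ∈ L¹([0,T]; H), lim_{n→∞} ∫₀^T ⟨(S⁽ⁿ⁾_t − S_t) f, g(t)⟩ dt = 0. Then for all T > 0 and f ∈ H, lim_{n→∞} ∫₀^T ‖(S⁽ⁿ⁾_t − S_t) f‖² dt = 0, and consequently lim_{n→∞} ∫₀^T ‖(S⁽ⁿ⁾_t − S_t) f‖ dt = 0. (The proof rests on the identity ∫₀^T ‖(S⁽ⁿ⁾_t − S_t) f‖² dt = ½ ∫₀^{2T} ⟨(S⁽ⁿ⁾_t − S_t)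 f, f⟩ dt − 2 Re ∫₀^T ⟨(S⁽ⁿ⁾_t − S_t) f, S_t f⟩ dt, valid by self-adjointness and the semigroup property.) -/
/-!
For self-adjoint `A`, `B` one has `‖Af - Bf‖² + 2 Re⟪Af - Bf, Bf⟫ = Re⟪A²f - B²f, f⟫`. Applied to
`A = Sⁿₜ`, `B = Sₜ` with `A² = Sⁿ₂ₜ`, `B² = S₂ₜ` and integrated (substituting `t ↦ 2t`), this writes
`∫₀ᵀ ‖(Sⁿₜ - Sₜ)f‖²` through the weak integrals against the `L¹` functions `g ≡ f` on `(0, 2T]` and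
`g = S·f` on `(0, T]`, both of which tend to `0`. Convergence in `L¹` then follows from convergence
in `L²` by Cauchy–Schwarz on the finite interval.
-/

open MeasureTheory Filter Topology Set
open scoped ENNReal

section

variable {α E : Type*} [MeasurableSpace α] [NormedAddCommGroup E] {μ : Measure α}

lemma ContinuousOn.memLp_restrict_of_norm_le [TopologicalSpace α] [OpensMeasurableSpace α]
    [SecondCountableTopologyEither α E] {u : α → E} {s : Set α} [IsFiniteMeasure (μ.restrict s)]
    (hu : ContinuousOn u s) (hs : MeasurableSet s) {C : ℝ} (hC : ∀ t ∈ s, ‖u t‖ ≤ C)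
    (p : ℝ≥0∞) : MemLp u p (μ.restrict s) :=
  .of_bound (hu.aestronglyMeasurable hs) C ((ae_restrict_iff' hs).2 (.of_forall hC))

lemma integral_norm_le_sqrt_integral_norm_sq_mul_sqrt [IsFiniteMeasure μ] {f : α → E}
    (hf : MemLp f 2 μ) : ∫ x, ‖f x‖ ∂μ ≤ √(∫ x, ‖f x‖ ^ 2 ∂μ) * √(μ.real univ) := by
  have holder := integral_mul_le_Lp_mul_Lq_of_nonneg (μ := μ) Real.HolderConjugate.two_two
    (f := fun x => ‖f x‖) (g := fun _ => (1 : ℝ)) (.of_forall fun _ => norm_nonneg _)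
    (.of_forall fun _ => zero_le_one) (by simpa using hf.norm) (memLp_const 1)
  simpa [Real.sqrt_eq_rpow] using holder

lemma tendsto_integral_norm_of_tendsto_integral_norm_sq [IsFiniteMeasure μ] {ι : Type*}
    {l : Filter ι} {f : ι → α → E} (hf : ∀ i, MemLp (f i) 2 μ)
    (h : Tendsto (fun i => ∫ x, ‖f i x‖ ^ 2 ∂μ) l (𝓝 0)) :
    Tendsto (fun i => ∫ x, ‖f i x‖ ∂μ) l (𝓝 0) :=
  squeeze_zero (fun _ => integral_nonneg fun _ => norm_nonneg _)
    (fun i => integral_norm_le_sqrt_integral_norm_sq_mul_sqrt (hf i))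
    (by simpa using h.sqrt.mul_const √(μ.real univ))

end

lemma IsSelfAdjoint.norm_sub_apply_sq_add {𝕜 H : Type*} [RCLike 𝕜] [NormedAddCommGroup H]
    [InnerProductSpace 𝕜 H] [CompleteSpace H] {A B : H →L[𝕜] H} (hA : IsSelfAdjoint A)
    (hB : IsSelfAdjoint B) (x : H) :
    ‖A x - B x‖ ^ 2 + 2 * RCLike.re (inner 𝕜 (A x - B x) (B x)) =
      RCLike.re (inner 𝕜 (A (A x) - B (B x)) x) := by
  have hAA : inner 𝕜 (A (A x)) x = inner 𝕜 (A x) (A x) := hA.isSymmetric (A x) x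
  have hBB : inner 𝕜 (B (B x)) x = inner 𝕜 (B x) (B x) := hB.isSymmetric (B x) x
  rw [@norm_sub_sq 𝕜, inner_sub_left, inner_sub_left, map_sub, map_sub, hAA, hBB,
    inner_self_eq_norm_sq (𝕜 := 𝕜), inner_self_eq_norm_sq (𝕜 := 𝕜)]
  ring

/-- A degenerate semigroup of self-adjoint contractions: only the values at `t > 0` matter, and
no continuity at `t = 0` is required. -/
structure IsSelfAdjointContractionSemigroup {𝕜 H : Type*} [RCLike 𝕜] [NormedAddCommGroup H]
    [InnerProductSpace 𝕜 H] [CompleteSpace H] (P : ℝ → H →L[𝕜] H) : Prop where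
  continuousOn_apply : ∀ x : H, ContinuousOn (fun t => P t x) (Ioi 0)
  map_add : ∀ s t : ℝ, 0 < s → 0 < t → P (s + t) = (P s).comp (P t)
  isSelfAdjoint : ∀ t : ℝ, 0 < t → IsSelfAdjoint (P t)
  norm_le_one : ∀ t : ℝ, 0 < t → ‖P t‖ ≤ 1

namespace IsSelfAdjointContractionSemigroup

variable {𝕜 H : Type*} [RCLike 𝕜] [NormedAddCommGroup H] [InnerProductSpace 𝕜 H] [CompleteSpace H]
  {P Q : ℝ → H →L[𝕜] H} {t T : ℝ}

lemma norm_apply_le (hP : IsSelfAdjointContractionSemigroup P) (ht : 0 < t) (x : H) :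
    ‖P t x‖ ≤ ‖x‖ :=
  ((P t).le_of_opNorm_le (hP.norm_le_one t ht) x).trans_eq (one_mul _)

lemma apply_two_mul (hP : IsSelfAdjointContractionSemigroup P) (ht : 0 < t) (x : H) :
    P (2 * t) x = P t (P t x) := by
  rw [two_mul, hP.map_add t t ht ht, ContinuousLinearMap.comp_apply]

lemma norm_sub_apply_le (hP : IsSelfAdjointContractionSemigroup P)
    (hQ : IsSelfAdjointContractionSemigroup Q) (ht : 0 < t) (x : H) :
    ‖P t x - Q t x‖ ≤ 2 * ‖x‖ := by
  linarith [norm_sub_le (P t x) (Q t x), hP.norm_apply_le ht x, hQ.norm_apply_le ht x]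

lemma memLp_apply (hP : IsSelfAdjointContractionSemigroup P) (T : ℝ) (x : H) (p : ℝ≥0∞) :
    MemLp (fun t => P t x) p (volume.restrict (Ioc 0 T)) :=
  ((hP.continuousOn_apply x).mono Ioc_subset_Ioi_self).memLp_restrict_of_norm_le
    measurableSet_Ioc (fun _ ht => hP.norm_apply_le ht.1 x) p

lemma memLp_sub_apply (hP : IsSelfAdjointContractionSemigroup P)
    (hQ : IsSelfAdjointContractionSemigroup Q) (T : ℝ) (x : H) (p : ℝ≥0∞) :
    MemLp (fun t => P t x - Q t x) p (volume.restrict (Ioc 0 T)) :=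
  (hP.memLp_apply T x p).sub (hQ.memLp_apply T x p)

lemma integrableOn_inner_sub_apply_apply (hP : IsSelfAdjointContractionSemigroup P)
    (hQ : IsSelfAdjointContractionSemigroup Q) (T : ℝ) (x : H) :
    IntegrableOn (fun t => inner 𝕜 (P t x - Q t x) (Q t x)) (Ioc 0 T) := by
  refine memLp_one_iff_integrable.1 <|
    ((((hP.continuousOn_apply x).sub (hQ.continuousOn_apply x)).inner
      (hQ.continuousOn_apply x)).mono Ioc_subset_Ioi_self).memLp_restrict_of_norm_le
      measurableSet_Ioc (C := 2 * ‖x‖ * ‖x‖) (fun t ht => ?_) 1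
  exact (norm_inner_le_norm _ _).trans <| mul_le_mul (hP.norm_sub_apply_le hQ ht.1 x)
    (hQ.norm_apply_le ht.1 x) (norm_nonneg _) (by positivity)

lemma integral_norm_sub_apply_sq (hP : IsSelfAdjointContractionSemigroup P)
    (hQ : IsSelfAdjointContractionSemigroup Q) (hT : 0 ≤ T) (x : H) :
    ∫ t in Ioc 0 T, ‖P t x - Q t x‖ ^ 2 =
      2⁻¹ * RCLike.re (∫ t in Ioc 0 (2 * T), inner 𝕜 (P t x - Q t x) x)
        - 2 * RCLike.re (∫ t in Ioc 0 T, inner 𝕜 (P t x - Q t x) (Q t x)) := by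
  have hpointwise : ∀ t ∈ Ioc 0 T, ‖P t x - Q t x‖ ^ 2
      + 2 * RCLike.re (inner 𝕜 (P t x - Q t x) (Q t x))
      = RCLike.re (inner 𝕜 (P (2 * t) x - Q (2 * t) x) x) := fun t ht => by
    rw [hP.apply_two_mul ht.1, hQ.apply_two_mul ht.1]
    exact (hP.isSelfAdjoint t ht.1).norm_sub_apply_sq_add (hQ.isSelfAdjoint t ht.1) x
  have hsubst : ∫ t in Ioc 0 T, RCLike.re (inner 𝕜 (P (2 * t) x - Q (2 * t) x) x) =
      2⁻¹ * ∫ t in Ioc 0 (2 * T), RCLike.re (inner 𝕜 (P t x - Q t x) x) := by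
    rw [← intervalIntegral.integral_of_le hT, ← intervalIntegral.integral_of_le (by linarith),
      intervalIntegral.integral_comp_mul_left (fun t => RCLike.re (inner 𝕜 (P t x - Q t x) x))
        two_ne_zero, mul_zero, smul_eq_mul]
  have hsq := (hP.memLp_sub_apply hQ T x 2).integrable_norm_pow two_ne_zero
  have hinner := hP.integrableOn_inner_sub_apply_apply hQ T x
  have hinner₂ := ((hP.memLp_sub_apply hQ (2 * T) x 1).integrable le_rfl).inner_const (𝕜 := 𝕜) x
  rw [← integral_re hinner, ← integral_re hinner₂, ← hsubst,
    ← setIntegral_congr_fun measurableSet_Ioc hpointwise,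
    integral_add hsq (hinner.re.const_mul 2), integral_const_mul]
  ring

end IsSelfAdjointContractionSemigroup

theorem L1_weak_convergence_to_L2_and_L1_norm_convergence
    {H : Type*} [NormedAddCommGroup H] [InnerProductSpace ℂ H] [CompleteSpace H]
    (S : ℕ → ℝ → H →L[ℂ] H) (S' : ℝ → H →L[ℂ] H)
    (hScont : ∀ n, ∀ x : H, ContinuousOn (fun t => S n t x) (Set.Ioi (0 : ℝ)))
    (hS'cont : ∀ x : H, ContinuousOn (fun t => S' t x) (Set.Ioi (0 : ℝ)))
    (hSsg : ∀ n, ∀ s t : ℝ, 0 < s → 0 < t → S n (s + t) = (S n s).comp (S n t))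
    (hS'sg : ∀ s t : ℝ, 0 < s → 0 < t → S' (s + t) = (S' s).comp (S' t))
    (hSsa : ∀ n, ∀ t : ℝ, 0 < t → IsSelfAdjoint (S n t))
    (hS'sa : ∀ t : ℝ, 0 < t → IsSelfAdjoint (S' t))
    (hScontr : ∀ n, ∀ t : ℝ, 0 < t → ‖S n t‖ ≤ 1)
    (hS'contr : ∀ t : ℝ, 0 < t → ‖S' t‖ ≤ 1)
    (h3 : ∀ T : ℝ, 0 < T → ∀ f : H, ∀ g : ℝ → H, IntegrableOn g (Set.Ioc (0 : ℝ) T) →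
      Tendsto (fun n => ∫ t in Set.Ioc (0 : ℝ) T, (inner ℂ (S n t f - S' t f) (g t) : ℂ))
        atTop (nhds 0)) :
    ∀ T : ℝ, 0 < T → ∀ f : H,
      Tendsto (fun n => ∫ t in Set.Ioc (0 : ℝ) T, ‖S n t f - S' t f‖ ^ 2)
        atTop (nhds 0) ∧
      Tendsto (fun n => ∫ t in Set.Ioc (0 : ℝ) T, ‖S n t f - S' t f‖)
        atTop (nhds 0) := by
  intro T hT f
  have hS n : IsSelfAdjointContractionSemigroup (S n) :=
    ⟨hScont n, hSsg n, hSsa n, hScontr n⟩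
  have hS' : IsSelfAdjointContractionSemigroup S' := ⟨hS'cont, hS'sg, hS'sa, hS'contr⟩
  have hconst :=
    h3 (2 * T) (by positivity) f (fun _ => f) (integrableOn_const measure_Ioc_lt_top.ne)
  have horbit := h3 T hT f (fun t => S' t f) ((hS'.memLp_apply T f 1).integrable le_rfl)
  have hL2 : Tendsto (fun n => ∫ t in Ioc 0 T, ‖S n t f - S' t f‖ ^ 2) atTop (𝓝 0) := by
    have hlim := (((RCLike.continuous_re.tendsto 0).comp hconst).const_mul 2⁻¹).sub
      (((RCLike.continuous_re.tendsto 0).comp horbit).const_mul 2)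
    simp only [map_zero, mul_zero, sub_zero] at hlim
    exact hlim.congr fun n => ((hS n).integral_norm_sub_apply_sq hS' hT.le f).symm
  exact ⟨hL2, tendsto_integral_norm_of_tendsto_integral_norm_sq
    (fun n => (hS n).memLp_sub_apply hS' T f 2) hL2⟩
end

section
/- Let H be a complex Hilbert space. For each n ∈ ℕ let S⁽ⁿ⁾ and S be degenerate semigroups on H consisting of self-adjoint contractions, with resolvents Rₙ(λ)f = ∫₀^∞ e^{−λt} S⁽ⁿ⁾_t f dt and R(λ)f = ∫₀^∞ e^{−λt} S_t f dt for Re λ > 0. Let λ ∈ ℂ ∖ ℝ with Re λ > 0 and suppose Rₙ(λ) → R(λ) in the weak operator topology. Then for every f ∈ H one has lim_{n→∞} ‖Rₙ(λ) f‖ = ‖R(λ) f‖, and consequently Rₙ(λ) → R(λ) in the strong operator topology. (Key identities: Rₙ(λ)* = Rₙ(λ̄) and Rₙ(λ̄) Rₙ(λ) = (λ − λ̄)^{−1} (Rₙ(λ̄) − Rₙ(λ)), and likewise for R.) -/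
/-!
The resolvent of a semigroup is the Laplace transform of its orbits, and Fubini on the triangle
`0 < t < u` turns the semigroup law into the resolvent identity
`R(z̄) R(z) = (z - z̄)⁻¹ (R(z̄) - R(z))`, while self-adjointness gives `R(z)* = R(z̄)`. Together
they yield `‖R(z) f‖² = Im ⟪R(z) f, f⟫ / Im z` for non-real `z`, so weak convergence of the
resolvents at `z` forces convergence of the norms; in a Hilbert space weak convergence together
with convergence of the norms is norm convergence.
-/

open MeasureTheory Filter Topology Set ComplexConjugate

noncomputable section

section Laplace

variable {E : Type*} [NormedAddCommGroup E] [NormedSpace ℂ E]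

/-- The resolvent `R(z) f` of a semigroup `T` is `laplaceTransform (fun t => T t f) z`. -/
def laplaceTransform (g : ℝ → E) (z : ℂ) : E :=
  ∫ t in Ioi (0 : ℝ), Complex.exp (-(z * t)) • g t

theorem norm_cexp_neg_mul_ofReal (z : ℂ) (t : ℝ) :
    ‖Complex.exp (-(z * t))‖ = Real.exp (-(z.re * t)) := by
  simp [Complex.norm_exp, Complex.mul_re]

theorem integrableOn_cexp_neg_mul_smul {g : ℝ → E} (hg : ContinuousOn g (Ioi 0)) {C : ℝ}
    (hC : ∀ t ∈ Ioi (0 : ℝ), ‖g t‖ ≤ C) {z : ℂ} (hz : 0 < z.re) :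
    IntegrableOn (fun t : ℝ => Complex.exp (-(z * t)) • g t) (Ioi 0) := by
  refine ((exp_neg_integrableOn_Ioi 0 hz).const_mul C).mono'
    ((by fun_prop : Continuous fun t : ℝ => Complex.exp (-(z * t))).continuousOn.smul hg
      |>.aestronglyMeasurable measurableSet_Ioi) ?_
  filter_upwards [ae_restrict_mem measurableSet_Ioi] with t ht
  rw [norm_smul, norm_cexp_neg_mul_ofReal, neg_mul, mul_comm C]
  exact mul_le_mul_of_nonneg_left (hC t ht) (Real.exp_pos _).le

theorem laplaceTransform_comp_add_right (g : ℝ → E) (z : ℂ) (t : ℝ) :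
    laplaceTransform (fun s => g (s + t)) z =
      Complex.exp (z * t) • ∫ u in Ioi t, Complex.exp (-(z * u)) • g u := by
  have himage : (fun s : ℝ => s + t) '' Ioi 0 = Ioi t := by simp
  rw [← himage, (measurePreserving_add_right volume t).setIntegral_image_emb
    (measurableEmbedding_addRight t), laplaceTransform, ← integral_smul]
  refine integral_congr_ae (Eventually.of_forall fun s => ?_)
  simp only [smul_smul, ← Complex.exp_add]
  congr 2
  push_cast
  ring

theorem measurableSet_triangle : MeasurableSet {p : ℝ × ℝ | 0 < p.1 ∧ p.1 < p.2} :=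
  (measurableSet_lt measurable_const measurable_fst).inter
    (measurableSet_lt measurable_fst measurable_snd)

theorem integral_Ioi_integral_Ioi_swap [CompleteSpace E] {F : ℝ → ℝ → E}
    (hF : IntegrableOn (Function.uncurry F) {p : ℝ × ℝ | 0 < p.1 ∧ p.1 < p.2}) :
    ∫ t in Ioi 0, ∫ u in Ioi t, F t u = ∫ u in Ioi 0, ∫ t in Ioo 0 u, F t u := by
  set D : Set (ℝ × ℝ) := {p | 0 < p.1 ∧ p.1 < p.2}
  have hD : MeasurableSet D := measurableSet_triangle
  have hG : Integrable (D.indicator (Function.uncurry F)) (volume.prod volume) :=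
    (integrable_indicator_iff hD).2 hF
  have hleft : ∀ t, (Ioi 0).indicator (fun t => ∫ u in Ioi t, F t u) t =
      ∫ u, D.indicator (Function.uncurry F) (t, u) := by
    intro t
    by_cases ht : 0 < t
    · rw [indicator_of_mem (show t ∈ Ioi 0 from ht), ← integral_indicator measurableSet_Ioi]
      simp [D, indicator, ht]
    · simp [D, indicator, ht]
  have hright : ∀ u, (Ioi 0).indicator (fun u => ∫ t in Ioo 0 u, F t u) u =
      ∫ t, D.indicator (Function.uncurry F) (t, u) := by
    intro u
    by_cases hu : 0 < u
    · rw [indicator_of_mem (show u ∈ Ioi 0 from hu), ← integral_indicator measurableSet_Ioo]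
      rfl
    · rw [indicator_of_notMem (show u ∉ Ioi 0 from hu)]
      have : ∀ t, ¬ (0 < t ∧ t < u) := fun t h => hu (h.1.trans h.2)
      simp [D, indicator, this]
  rw [← integral_indicator measurableSet_Ioi, ← integral_indicator measurableSet_Ioi]
  simp only [hleft, hright]
  exact integral_integral_swap hG

theorem integrableOn_cexp_smul_triangle {g : ℝ → E} (hg : ContinuousOn g (Ioi 0)) {C : ℝ}
    (hC : ∀ t ∈ Ioi (0 : ℝ), ‖g t‖ ≤ C) {a b : ℂ} (ha : 0 < a.re) (hb : 0 < b.re) :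
    IntegrableOn
      (fun p : ℝ × ℝ => Complex.exp ((b - a) * p.1) • Complex.exp (-(b * p.2)) • g p.2)
      {p : ℝ × ℝ | 0 < p.1 ∧ p.1 < p.2} := by
  set D : Set (ℝ × ℝ) := {p | 0 < p.1 ∧ p.1 < p.2}
  have hD : MeasurableSet D := measurableSet_triangle
  obtain ⟨ε, hε, hεa, hεb⟩ : ∃ ε : ℝ, 0 < ε ∧ 2 * ε ≤ a.re ∧ 2 * ε ≤ b.re :=
    ⟨min a.re b.re / 2, by positivity, by linarith [min_le_left a.re b.re],
      by linarith [min_le_right a.re b.re]⟩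
  have hbound : IntegrableOn (fun p : ℝ × ℝ => C * Real.exp (-ε * p.1) * Real.exp (-ε * p.2))
      (Ioi 0 ×ˢ Ioi 0) := by
    rw [IntegrableOn, Measure.volume_eq_prod, ← Measure.prod_restrict]
    exact ((exp_neg_integrableOn_Ioi 0 hε).const_mul C).mul_prod (exp_neg_integrableOn_Ioi 0 hε)
  have hmeas : AEStronglyMeasurable
      (fun p : ℝ × ℝ => Complex.exp ((b - a) * p.1) • Complex.exp (-(b * p.2)) • g p.2)
      (volume.restrict D) := by
    refine ContinuousOn.aestronglyMeasurable ?_ hD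
    have hexp₁ : Continuous fun p : ℝ × ℝ => Complex.exp ((b - a) * p.1) := by fun_prop
    have hexp₂ : Continuous fun p : ℝ × ℝ => Complex.exp (-(b * p.2)) := by fun_prop
    exact hexp₁.continuousOn.smul <| hexp₂.continuousOn.smul <|
      hg.comp continuous_snd.continuousOn fun p hp => hp.1.trans hp.2
  refine (hbound.mono_set fun p hp => ⟨hp.1, hp.1.trans hp.2⟩).mono' hmeas ?_
  filter_upwards [ae_restrict_mem hD] with p ⟨hp1, hp2⟩
  -- on `0 < t < u` the exponent is `-a.re t - b.re (u - t) ≤ -2ε u ≤ -ε t - ε u`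
  have hexp : Real.exp ((b.re - a.re) * p.1) * Real.exp (-(b.re * p.2)) ≤
      Real.exp (-ε * p.1) * Real.exp (-ε * p.2) := by
    rw [← Real.exp_add, ← Real.exp_add, Real.exp_le_exp]
    nlinarith [mul_nonneg (sub_nonneg.2 hεa) hp1.le, mul_nonneg hε.le (sub_nonneg.2 hp2.le),
      mul_nonneg (sub_nonneg.2 hεb) (sub_nonneg.2 hp2.le)]
  have hnorm : ‖Complex.exp ((b - a) * p.1)‖ = Real.exp ((b.re - a.re) * p.1) := by
    simp [Complex.norm_exp]
  rw [norm_smul, norm_smul, hnorm, norm_cexp_neg_mul_ofReal, ← mul_assoc]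
  calc _ ≤ (Real.exp (-ε * p.1) * Real.exp (-ε * p.2)) * C :=
        mul_le_mul hexp (hC _ (hp1.trans hp2)) (norm_nonneg _) (by positivity)
    _ = _ := by ring

theorem integral_Ioo_cexp_mul {c : ℂ} (hc : c ≠ 0) {u : ℝ} (hu : 0 ≤ u) :
    ∫ t in Ioo 0 u, Complex.exp (c * t) = (Complex.exp (c * u) - 1) / c := by
  rw [← integral_Ioc_eq_integral_Ioo, ← intervalIntegral.integral_of_le hu,
    integral_exp_mul_complex hc]
  simp

theorem laplaceTransform_laplaceTransform_comp_add [CompleteSpace E] {g : ℝ → E}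
    (hg : ContinuousOn g (Ioi 0)) {C : ℝ} (hC : ∀ t ∈ Ioi (0 : ℝ), ‖g t‖ ≤ C) {a b : ℂ}
    (ha : 0 < a.re) (hb : 0 < b.re) (hab : a ≠ b) :
    laplaceTransform (fun t => laplaceTransform (fun s => g (s + t)) b) a =
      (a - b)⁻¹ • (laplaceTransform g b - laplaceTransform g a) := by
  set F : ℝ → ℝ → E := fun t u => Complex.exp ((b - a) * t) • Complex.exp (-(b * u)) • g u
    with hF
  have hinner : ∀ t : ℝ, Complex.exp (-(a * t)) • laplaceTransform (fun s => g (s + t)) b =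
      ∫ u in Ioi t, F t u := by
    intro t
    rw [laplaceTransform_comp_add_right, smul_smul, ← Complex.exp_add, integral_smul]
    congr 3
    ring
  have hcollapse : ∀ u ∈ Ioi (0 : ℝ), ∫ t in Ioo 0 u, F t u =
      (a - b)⁻¹ • (Complex.exp (-(b * u)) • g u - Complex.exp (-(a * u)) • g u) := by
    intro u hu
    have hexp : Complex.exp ((b - a) * u) * Complex.exp (-(b * u)) = Complex.exp (-(a * u)) := by
      rw [← Complex.exp_add]; ring_nf
    have hab' : a - b ≠ 0 := sub_ne_zero.2 hab
    have hba : b - a ≠ 0 := sub_ne_zero.2 hab.symm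
    rw [hF, integral_smul_const, integral_Ioo_cexp_mul hba hu.le, smul_smul, ← sub_smul,
      smul_smul, ← hexp]
    congr 1
    field_simp
    ring
  calc laplaceTransform (fun t => laplaceTransform (fun s => g (s + t)) b) a
      = ∫ t in Ioi (0 : ℝ), ∫ u in Ioi t, F t u := integral_congr_ae (.of_forall hinner)
    _ = ∫ u in Ioi (0 : ℝ), ∫ t in Ioo 0 u, F t u :=
        integral_Ioi_integral_Ioi_swap (integrableOn_cexp_smul_triangle hg hC ha hb)
    _ = ∫ u in Ioi (0 : ℝ),
          (a - b)⁻¹ • (Complex.exp (-(b * u)) • g u - Complex.exp (-(a * u)) • g u) :=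
        setIntegral_congr_fun measurableSet_Ioi hcollapse
    _ = (a - b)⁻¹ • (laplaceTransform g b - laplaceTransform g a) := by
      rw [integral_smul, integral_sub (integrableOn_cexp_neg_mul_smul hg hC hb)
        (integrableOn_cexp_neg_mul_smul hg hC ha)]
      rfl

end Laplace

section Semigroup

variable {E : Type*} [NormedAddCommGroup E] [NormedSpace ℂ E]
  {T : ℝ → E →L[ℂ] E} {M : ℝ}

theorem integrableOn_cexp_neg_mul_smul_apply {x : E}
    (hcont : ContinuousOn (fun t => T t x) (Ioi 0)) (hbdd : ∀ t, 0 < t → ‖T t‖ ≤ M) {z : ℂ}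
    (hz : 0 < z.re) : IntegrableOn (fun t : ℝ => Complex.exp (-(z * t)) • T t x) (Ioi 0) :=
  integrableOn_cexp_neg_mul_smul hcont (fun t ht => (T t).le_of_opNorm_le (hbdd t ht) x) hz

theorem laplaceTransform_apply_laplaceTransform [CompleteSpace E]
    (hcont : ∀ x, ContinuousOn (fun t => T t x) (Ioi 0))
    (hsg : ∀ s t : ℝ, 0 < s → 0 < t → T (s + t) = (T s).comp (T t))
    (hbdd : ∀ t, 0 < t → ‖T t‖ ≤ M) {a b : ℂ} (ha : 0 < a.re) (hb : 0 < b.re) (hab : a ≠ b)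
    (x : E) :
    laplaceTransform (fun s => T s (laplaceTransform (fun t => T t x) b)) a =
      (a - b)⁻¹ • (laplaceTransform (fun t => T t x) b - laplaceTransform (fun t => T t x) a) := by
  have hshift : ∀ s ∈ Ioi (0 : ℝ),
      Complex.exp (-(a * s)) • T s (laplaceTransform (fun t => T t x) b) =
        Complex.exp (-(a * s)) • laplaceTransform (fun t => T (t + s) x) b := by
    intro s hs
    rw [laplaceTransform, ← (T s).integral_comp_comm
      (integrableOn_cexp_neg_mul_smul_apply (hcont x) hbdd hb)]
    congr 1
    refine setIntegral_congr_fun measurableSet_Ioi fun t ht => ?_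
    rw [map_smul, ← ContinuousLinearMap.comp_apply, ← hsg s t hs ht, add_comm]
  rw [laplaceTransform, setIntegral_congr_fun measurableSet_Ioi hshift]
  exact laplaceTransform_laplaceTransform_comp_add (hcont x)
    (fun t ht => (T t).le_of_opNorm_le (hbdd t ht) x) ha hb hab

end Semigroup

section SelfAdjoint

variable {H : Type*} [NormedAddCommGroup H] [InnerProductSpace ℂ H] [CompleteSpace H]
  {T : ℝ → H →L[ℂ] H} {M : ℝ}

theorem inner_laplaceTransform_left (hcont : ∀ x, ContinuousOn (fun t => T t x) (Ioi 0))
    (hsa : ∀ t, 0 < t → IsSelfAdjoint (T t)) (hbdd : ∀ t, 0 < t → ‖T t‖ ≤ M) {z : ℂ}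
    (hz : 0 < z.re) (x y : H) :
    inner ℂ (laplaceTransform (fun t => T t x) z) y =
      inner ℂ x (laplaceTransform (fun t => T t y) (conj z)) := by
  have hz' : 0 < (conj z).re := by simpa using hz
  rw [laplaceTransform, laplaceTransform, ← inner_conj_symm,
    ← integral_inner (integrableOn_cexp_neg_mul_smul_apply (hcont x) hbdd hz),
    ← integral_inner (integrableOn_cexp_neg_mul_smul_apply (hcont y) hbdd hz'), ← integral_conj]
  refine setIntegral_congr_fun measurableSet_Ioi fun t ht => ?_
  simp only [inner_smul_right, map_mul, inner_conj_symm, ← Complex.exp_conj, map_neg,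
    Complex.conj_ofReal]
  exact congrArg _ ((hsa t ht).isSymmetric x y)

theorem norm_laplaceTransform_sq (hcont : ∀ x, ContinuousOn (fun t => T t x) (Ioi 0))
    (hsg : ∀ s t : ℝ, 0 < s → 0 < t → T (s + t) = (T s).comp (T t))
    (hsa : ∀ t, 0 < t → IsSelfAdjoint (T t)) (hbdd : ∀ t, 0 < t → ‖T t‖ ≤ M) {z : ℂ}
    (hz : 0 < z.re) (hz_im : z.im ≠ 0) (x : H) :
    ‖laplaceTransform (fun t => T t x) z‖ ^ 2 =
      (inner ℂ (laplaceTransform (fun t => T t x) z) x).im / z.im := by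
  set R : ℂ → H → H := fun w y => laplaceTransform (fun t => T t y) w with hR
  set w := inner ℂ (R z x) x
  have hzc : 0 < (conj z).re := by simpa using hz
  have hne : conj z ≠ z := fun h => hz_im (Complex.conj_eq_iff_im.1 h)
  have hcomplex : ((‖R z x‖ ^ 2 : ℝ) : ℂ) * (conj z - z) = conj w - w := by
    calc ((‖R z x‖ ^ 2 : ℝ) : ℂ) * (conj z - z)
        = inner ℂ (R z x) (R z x) * (conj z - z) := by
          rw [inner_self_eq_norm_sq_to_K]; push_cast; rfl
      _ = inner ℂ x (R (conj z) (R z x)) * (conj z - z) := by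
          rw [inner_laplaceTransform_left hcont hsa hbdd hz]
      _ = (inner ℂ x (R z x) - inner ℂ x (R (conj z) x)) := by
          simp only [hR]
          rw [laplaceTransform_apply_laplaceTransform hcont hsg hbdd hzc hz hne,
            inner_smul_right, inner_sub_right]
          field_simp
      _ = conj w - w := by
          rw [← inner_laplaceTransform_left hcont hsa hbdd hz, inner_conj_symm]
  have him := congrArg Complex.im hcomplex
  simp only [Complex.mul_im, Complex.ofReal_re, Complex.ofReal_im, Complex.sub_im,
    Complex.conj_im, Complex.sub_re, Complex.conj_re] at him
  field_simp
  linarith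

end SelfAdjoint

theorem tendsto_of_tendsto_norm_of_tendsto_inner {𝕜 F ι : Type*} [RCLike 𝕜]
    [NormedAddCommGroup F] [InnerProductSpace 𝕜 F] {l : Filter ι} {x : ι → F} {y : F}
    (hnorm : Tendsto (fun i => ‖x i‖) l (𝓝 ‖y‖))
    (hinner : Tendsto (fun i => inner 𝕜 (x i) y) l (𝓝 (inner 𝕜 y y))) :
    Tendsto x l (𝓝 y) := by
  have hsq : Tendsto (fun i => ‖x i - y‖ ^ 2) l
      (𝓝 (‖y‖ ^ 2 - 2 * RCLike.re (inner 𝕜 y y) + ‖y‖ ^ 2)) := by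
    simp only [@norm_sub_sq 𝕜]
    have hre := ((RCLike.continuous_re.tendsto _).comp hinner).const_mul 2
    exact ((hnorm.pow 2).sub hre).add_const _
  rw [← @norm_sub_sq 𝕜, sub_self, norm_zero] at hsq
  rw [tendsto_iff_norm_sub_tendsto_zero]
  simpa [Real.sqrt_sq] using hsq.sqrt

end

theorem weak_resolvent_convergence_at_nonreal_implies_strong
    {H : Type*} [NormedAddCommGroup H] [InnerProductSpace ℂ H] [CompleteSpace H]
    (S : ℕ → ℝ → H →L[ℂ] H) (S' : ℝ → H →L[ℂ] H)
    (hScont : ∀ n, ∀ x : H, ContinuousOn (fun t => S n t x) (Set.Ioi (0 : ℝ)))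
    (hS'cont : ∀ x : H, ContinuousOn (fun t => S' t x) (Set.Ioi (0 : ℝ)))
    (hSsg : ∀ n, ∀ s t : ℝ, 0 < s → 0 < t → S n (s + t) = (S n s).comp (S n t))
    (hS'sg : ∀ s t : ℝ, 0 < s → 0 < t → S' (s + t) = (S' s).comp (S' t))
    (hSsa : ∀ n, ∀ t : ℝ, 0 < t → IsSelfAdjoint (S n t))
    (hS'sa : ∀ t : ℝ, 0 < t → IsSelfAdjoint (S' t))
    (hScontr : ∀ n, ∀ t : ℝ, 0 < t → ‖S n t‖ ≤ 1)
    (hS'contr : ∀ t : ℝ, 0 < t → ‖S' t‖ ≤ 1)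
    (R : ℕ → ℂ → H →L[ℂ] H) (R' : ℂ → H →L[ℂ] H)
    (hR : ∀ n, ∀ lam : ℂ, 0 < lam.re → ∀ f : H,
      R n lam f = ∫ t in Set.Ioi (0 : ℝ), Complex.exp (-(lam * t)) • S n t f)
    (hR' : ∀ lam : ℂ, 0 < lam.re → ∀ f : H,
      R' lam f = ∫ t in Set.Ioi (0 : ℝ), Complex.exp (-(lam * t)) • S' t f)
    (lam : ℂ) (hlam_re : 0 < lam.re) (hlam_im : lam.im ≠ 0)
    (hWOT : ∀ f g : H,
      Tendsto (fun n => (inner ℂ (R n lam f) g : ℂ)) atTop (nhds (inner ℂ (R' lam f) g))) :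
    (∀ f : H, Tendsto (fun n => ‖R n lam f‖) atTop (nhds ‖R' lam f‖)) ∧
    (∀ f : H, Tendsto (fun n => R n lam f) atTop (nhds (R' lam f))) := by
  have hnorm_sq : ∀ f, Tendsto (fun n => ‖R n lam f‖ ^ 2) atTop (𝓝 (‖R' lam f‖ ^ 2)) := by
    intro f
    have hRsq : ∀ n, ‖R n lam f‖ ^ 2 = (inner ℂ (R n lam f) f).im / lam.im := fun n =>
      (hR n lam hlam_re f).symm ▸ norm_laplaceTransform_sq (hScont n) (hSsg n) (hSsa n)
        (hScontr n) hlam_re hlam_im f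
    have hR'sq : ‖R' lam f‖ ^ 2 = (inner ℂ (R' lam f) f).im / lam.im :=
      (hR' lam hlam_re f).symm ▸ norm_laplaceTransform_sq hS'cont hS'sg hS'sa hS'contr
        hlam_re hlam_im f
    simp only [hRsq, hR'sq]
    exact ((Complex.continuous_im.tendsto _).comp (hWOT f f)).div_const _
  have hnorm : ∀ f, Tendsto (fun n => ‖R n lam f‖) atTop (𝓝 ‖R' lam f‖) := fun f => by
    simpa [Real.sqrt_sq] using (hnorm_sq f).sqrt
  exact ⟨hnorm, fun f => tendsto_of_tendsto_norm_of_tendsto_inner (hnorm f) (hWOT f _)⟩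
end
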